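/- arXiv:1909.00038 — 4 statements merged into one kernel-verified Lean document; each statement's English description precedes it below -/
import Mathlib

section
/- Let $p_V, q_V \in (0,1)$ with $q_V = 1-p_V$ and $p_V/q_V = V/\lambda$ for a constant $\lambda>0$, and let $\mu$ be the exponential distribution with rate $\lambda$ on $(0,\infty)$. Then for every $k > 0$, $\lim_{V\to\infty} V \sup_{1 \le m \le kV} \left| p_V^m q_V - \mu\left[\tfrac{m}{V}, \tfrac{m+1}{V}\right) \right| = 0$, where the supremum is over positive integers $m \le kV$. -/
/-!
With `b = λ / V` the scaling relation forces `p_V = (1 + b)⁻¹`, and the exponential cell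
`μ[m/V, (m+1)/V)` equals `y^m (1 - y)` with `y = e^{-b}`: the discretised exponential law is
itself geometric. The two ratios satisfy `0 ≤ (1 + b)⁻¹ - e^{-b} ≤ b²`, and on `[0, 1]` the map
`t ↦ t^m (1 - t)` moves between `x` and `y` by at most `(m (1 - x) + 1) |x - y|`, where
`1 - p_V ≤ b`. Hence the error is at most `(m b + 1) b² ≤ (k λ + 1) λ² / V²`, which is `o(1/V)`.
-/

theorem abs_pow_sub_pow_le_of_mem_Icc {x y : ℝ} (hx : x ∈ Set.Icc (0 : ℝ) 1)
    (hy : y ∈ Set.Icc (0 : ℝ) 1) (m : ℕ) : |x ^ m - y ^ m| ≤ m * |x - y| := by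
  have hmax : max |x| |y| ≤ 1 := max_le ((abs_of_nonneg hx.1).trans_le hx.2)
    ((abs_of_nonneg hy.1).trans_le hy.2)
  calc |x ^ m - y ^ m| ≤ |x - y| * m * max |x| |y| ^ (m - 1) := abs_pow_sub_pow_le ..
    _ ≤ |x - y| * m * 1 := by gcongr; exact pow_le_one₀ (by positivity) hmax
    _ = m * |x - y| := by ring

theorem abs_pow_mul_one_sub_sub_le {x y : ℝ} (hx : x ∈ Set.Icc (0 : ℝ) 1)
    (hy : y ∈ Set.Icc (0 : ℝ) 1) (m : ℕ) :
    |x ^ m * (1 - x) - y ^ m * (1 - y)| ≤ (m * (1 - x) + 1) * |x - y| := by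
  have hx1 : 0 ≤ 1 - x := sub_nonneg.2 hx.2
  have hym : y ^ m ≤ 1 := pow_le_one₀ hy.1 hy.2
  calc |x ^ m * (1 - x) - y ^ m * (1 - y)| = |(x ^ m - y ^ m) * (1 - x) + y ^ m * (y - x)| := by
        congr 1; ring
    _ ≤ |x ^ m - y ^ m| * (1 - x) + y ^ m * |x - y| := by
        refine (abs_add_le _ _).trans ?_
        rw [abs_mul, abs_mul, abs_of_nonneg hx1, abs_of_nonneg (pow_nonneg hy.1 m), abs_sub_comm y]
    _ ≤ m * |x - y| * (1 - x) + 1 * |x - y| := by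
        gcongr
        exact abs_pow_sub_pow_le_of_mem_Icc hx hy m
    _ = (m * (1 - x) + 1) * |x - y| := by ring

theorem exp_neg_le_inv_one_add {b : ℝ} (hb : -1 < b) : Real.exp (-b) ≤ (1 + b)⁻¹ := by
  rw [Real.exp_neg]
  exact inv_anti₀ (by linarith) (by linarith [Real.add_one_le_exp b])

theorem inv_one_add_sub_exp_neg_le_sq {b : ℝ} (hb : 0 ≤ b) : (1 + b)⁻¹ - Real.exp (-b) ≤ b ^ 2 := by
  have hinv : (1 + b)⁻¹ ≤ 1 - b + b ^ 2 := by
    rw [inv_le_iff_one_le_mul₀' (by positivity)]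
    nlinarith [pow_nonneg hb 3]
  linarith [Real.one_sub_le_exp_neg b]

theorem one_sub_inv_one_add_le {b : ℝ} (hb : 0 ≤ b) : 1 - (1 + b)⁻¹ ≤ b := by
  have : 1 - (1 + b)⁻¹ = b / (1 + b) := by field_simp; ring
  rw [this]
  exact div_le_self hb (by linarith)

theorem abs_geometric_sub_exp_neg_geometric_le {b : ℝ} (hb : 0 ≤ b) (m : ℕ) :
    |(1 + b)⁻¹ ^ m * (1 - (1 + b)⁻¹) - Real.exp (-b) ^ m * (1 - Real.exp (-b))|
      ≤ (m * b + 1) * b ^ 2 := by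
  have hx : (1 + b)⁻¹ ∈ Set.Icc (0 : ℝ) 1 := ⟨by positivity, inv_le_one_of_one_le₀ (by linarith)⟩
  have hy : Real.exp (-b) ∈ Set.Icc (0 : ℝ) 1 :=
    ⟨(Real.exp_pos _).le, Real.exp_le_one_iff.2 (by linarith)⟩
  have hdiff : |(1 + b)⁻¹ - Real.exp (-b)| ≤ b ^ 2 := by
    rw [abs_of_nonneg (sub_nonneg.2 (exp_neg_le_inv_one_add (by linarith)))]
    exact inv_one_add_sub_exp_neg_le_sq hb
  calc _ ≤ (m * (1 - (1 + b)⁻¹) + 1) * |(1 + b)⁻¹ - Real.exp (-b)| :=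
        abs_pow_mul_one_sub_sub_le hx hy m
    _ ≤ (m * b + 1) * b ^ 2 := by
        gcongr
        exact one_sub_inv_one_add_le hb

theorem eq_inv_one_add_of_div_one_sub_eq_inv {p b : ℝ} (hb : 0 < b) (h : p / (1 - p) = b⁻¹) :
    p = (1 + b)⁻¹ := by
  have hq : 1 - p ≠ 0 := by
    intro h0
    rw [h0, div_zero] at h
    exact (inv_pos.2 hb).ne h
  rw [div_eq_iff hq] at h
  field_simp
  field_simp at h
  linarith

theorem exp_neg_sub_exp_neg_eq_pow_mul (lam V : ℝ) (m : ℕ) :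
    Real.exp (-(lam * m / V)) - Real.exp (-(lam * (m + 1) / V))
      = Real.exp (-(lam / V)) ^ m * (1 - Real.exp (-(lam / V))) := by
  rw [← Real.exp_nat_mul, mul_sub, mul_one, ← Real.exp_add]
  congr 2 <;> ring

theorem geometric_to_exponential_uniform_general (lam : ℝ) (hlam : 0 < lam)
    (p q : ℝ → ℝ)
    (hq : ∀ V > 0, q V = 1 - p V)
    (hscale : ∀ V > 0, p V / q V = V / lam)
    (k : ℝ) :
    ∀ ε > 0, ∃ V₀ > 0, ∀ V ≥ V₀, ∀ m : ℕ, 1 ≤ m → (m : ℝ) ≤ k * V →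
      V * |p V ^ m * q V -
        (Real.exp (-(lam * m / V)) - Real.exp (-(lam * (m + 1) / V)))| < ε := by
  intro ε hε
  set C := (k * lam + 1) * lam ^ 2
  refine ⟨max 1 (C / ε + 1), by positivity, fun V hV m _ hmk => ?_⟩
  have hV0 : 0 < V := lt_of_lt_of_le one_pos (le_of_max_le_left hV)
  have hCV : C < ε * V := by
    rw [← div_lt_iff₀' hε]; linarith [le_of_max_le_right hV]
  set b := lam / V
  have hb : 0 < b := by positivity
  have hp : p V = (1 + b)⁻¹ :=
    eq_inv_one_add_of_div_one_sub_eq_inv hb (by rw [← hq V hV0, hscale V hV0, inv_div])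
  have hmb : m * b ≤ k * lam := by
    calc m * b ≤ k * V * b := by gcongr
      _ = k * lam := by simp only [b]; field_simp
  rw [hq V hV0, hp, exp_neg_sub_exp_neg_eq_pow_mul]
  calc V * |_| ≤ V * ((k * lam + 1) * b ^ 2) := by
        gcongr
        exact (abs_geometric_sub_exp_neg_geometric_le hb.le m).trans (by gcongr)
    _ = C / V := by simp only [b, C]; field_simp
    _ < ε := by rwa [div_lt_iff₀ hV0]

/-- Uniform convergence of geometric burst-size probabilities to the exponential
distribution cell probabilities: for every `k > 0`,
`V * sup_{1 ≤ m ≤ kV} |p_V^m q_V - μ[m/V, (m+1)/V)| → 0` as `V → ∞`, where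
`μ[m/V,(m+1)/V) = exp (-lam*m/V) - exp (-lam*(m+1)/V)` for the exponential
distribution with rate `lam`. Stated in ε-δ form. -/
theorem geometric_to_exponential_uniform (lam : ℝ) (hlam : 0 < lam)
    (p q : ℝ → ℝ)
    (hp : ∀ V > 0, p V ∈ Set.Ioo (0:ℝ) 1)
    (hq : ∀ V > 0, q V = 1 - p V)
    (hscale : ∀ V > 0, p V / q V = V / lam)
    (k : ℝ) (hk : 0 < k) :
    ∀ ε > 0, ∃ V₀ > 0, ∀ V ≥ V₀, ∀ m : ℕ, 1 ≤ m → (m : ℝ) ≤ k * V →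
      V * |p V ^ m * q V -
        (Real.exp (-(lam * m / V)) - Real.exp (-(lam * (m + 1) / V)))| < ε :=
  geometric_to_exponential_uniform_general lam hlam p q hq hscale k
end

section
/- Let $c: \mathbb{R}_+ \to \mathbb{R}_+$ be a constant function $c(x) = c > 0$, let $r, \lambda > 0$, and let $p(x) = \frac{\lambda^{c/r}}{\Gamma(c/r)} x^{c/r - 1} e^{-\lambda x}$ for $x > 0$. Then $p$ is a probability density on $(0,\infty)$ and satisfies the stationary equation for the gene expression PDMP generator: for all continuously differentiable $f$ with compact support in $[0,\infty)$, $\int_0^\infty \left[ -r x f'(x) + c \int_0^\infty (f(x+y) - f(x)) \lambda e^{-\lambda y}\, dy \right] p(x)\, dx = 0$. -/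
/-!
The stationary equation follows from one exact derivative. With `α = c / r`,
`F x = ∫_x^∞ f t e^{-λt} dt` and `w = λ F - f e^{-λ·}`, the inner jump integral equals
`λ e^{λx} F x - f x`, and the integrand against the gamma density `C x ^ (α - 1) e^{-λx}` is
`r C (x ^ α w x)'`. Since `x ^ α w x` vanishes at `0` (as `α > 0`) and for large `x`
(compact support of `f`), its integral over `(0, ∞)` is zero.
-/

open MeasureTheory Real

open Set Filter Topology

theorem HasCompactSupport.eventuallyEq_zero_atTop {β : Type*} [Zero β] {f : ℝ → β}
    (hf : HasCompactSupport f) : f =ᶠ[atTop] 0 :=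
  atTop_le_cocompact.trans coclosedCompact_eq_cocompact.ge (hasCompactSupport_iff_eventuallyEq.1 hf)

theorem integrableOn_Ioi_rpow_mul_of_eventuallyEq_zero {a : ℝ} (ha : -1 < a) {h : ℝ → ℝ}
    (hc : Continuous h) (h0 : h =ᶠ[atTop] 0) :
    IntegrableOn (fun x => x ^ a * h x) (Ioi 0) := by
  obtain ⟨M, hM⟩ := eventually_atTop.1 h0
  have hpow : IntegrableOn (fun x : ℝ => x ^ a) (Icc 0 M) :=
    (integrableOn_Icc_iff_integrableOn_Ioc).2
      ((intervalIntegral.intervalIntegrable_rpow' ha).def'.mono_set Ioc_subset_uIoc)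
  have hnear : IntegrableOn (fun x => x ^ a * h x) (Ioc 0 M) :=
    (hpow.mul_continuousOn hc.continuousOn isCompact_Icc).mono_set Ioc_subset_Icc_self
  have hfar : IntegrableOn (fun x => x ^ a * h x) (Ioi M) :=
    integrableOn_zero.congr_fun (fun x hx => by simp [hM x (le_of_lt hx)]) measurableSet_Ioi
  refine (hnear.union hfar).mono_set fun x (hx : 0 < x) => ?_
  rcases le_or_gt x M with hxM | hxM
  exacts [Or.inl ⟨hx, hxM⟩, Or.inr hxM]

theorem integral_Ioi_deriv_rpow_mul_eq_zero {α : ℝ} (hα : 0 < α) {w w' : ℝ → ℝ}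
    (hw : ∀ x, HasDerivAt w (w' x) x) (hw' : Continuous w') (hw0 : w =ᶠ[atTop] 0)
    (hw'0 : w' =ᶠ[atTop] 0) :
    ∫ x in Ioi 0, x ^ (α - 1) * (α * w x + x * w' x) = 0 := by
  have hwc : Continuous w := continuous_iff_continuousAt.2 fun x => (hw x).continuousAt
  have hderiv : ∀ x ∈ Ioi (0 : ℝ),
      HasDerivAt (fun y => y ^ α * w y) (x ^ (α - 1) * (α * w x + x * w' x)) x := by
    intro x (hx : 0 < x)
    refine ((hasDerivAt_rpow_const (p := α) (Or.inl hx.ne')).mul (hw x)).congr_deriv ?_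
    rw [rpow_sub_one hx.ne']
    field_simp
  have hcont : ContinuousWithinAt (fun y => y ^ α * w y) (Ici 0) 0 :=
    ((continuousAt_rpow_const 0 α (Or.inr hα.le)).mul hwc.continuousAt).continuousWithinAt
  have hlim : Tendsto (fun y => y ^ α * w y) atTop (𝓝 0) :=
    tendsto_const_nhds.congr' (hw0.mono fun y hy => by simp [hy])
  have hint : IntegrableOn (fun x => x ^ (α - 1) * (α * w x + x * w' x)) (Ioi 0) :=
    integrableOn_Ioi_rpow_mul_of_eventuallyEq_zero (by linarith) (by fun_prop)
      (by filter_upwards [hw0, hw'0] with x hx hx'; simp [hx, hx'])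
  simpa [zero_rpow hα.ne'] using integral_Ioi_of_hasDerivAt_of_tendsto hcont hderiv hint hlim

theorem hasDerivAt_integral_Ioi {G : ℝ → ℝ} (hG : Continuous G) (hGi : Integrable G) (x : ℝ) :
    HasDerivAt (fun a => ∫ t in Ioi a, G t) (-G x) x := by
  have h : (fun a => ∫ t in Ioi a, G t) = fun a => (∫ t in Ioi 0, G t) - ∫ t in 0..a, G t := by
    funext a
    exact eq_sub_of_add_eq'
      (intervalIntegral.integral_interval_add_Ioi hGi.integrableOn hGi.integrableOn)
  rw [h]
  exact (hG.integral_hasStrictDerivAt 0 x).hasDerivAt.const_sub _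

theorem eventuallyEq_zero_atTop_integral_Ioi {G : ℝ → ℝ} (hG0 : G =ᶠ[atTop] 0) :
    (fun x => ∫ t in Ioi x, G t) =ᶠ[atTop] 0 := by
  obtain ⟨M, hM⟩ := eventually_atTop.1 hG0
  filter_upwards [eventually_ge_atTop M] with x hx
  exact setIntegral_eq_zero_of_forall_eq_zero fun t ht => hM t (hx.trans (le_of_lt ht))

theorem hasDerivAt_const_mul_integral_Ioi_sub {f : ℝ → ℝ} {lam : ℝ} (hf : Differentiable ℝ f)
    (hi : Integrable fun t => f t * exp (-lam * t)) (x : ℝ) :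
    HasDerivAt (fun x => lam * (∫ t in Ioi x, f t * exp (-lam * t)) - f x * exp (-lam * x))
      (-(deriv f x * exp (-lam * x))) x := by
  have hexp : HasDerivAt (fun y => exp (-lam * y)) (-lam * exp (-lam * x)) x :=
    ((hasDerivAt_id x).const_mul (-lam)).exp.congr_deriv (by simp only [id]; ring)
  have hc : Continuous fun t => f t * exp (-lam * t) := hf.continuous.mul (by fun_prop)
  have htail := hasDerivAt_integral_Ioi hc hi x
  exact ((htail.const_mul lam).sub ((hf x).hasDerivAt.mul hexp)).congr_deriv (by ring)

theorem integral_Ioi_comp_add_left (g : ℝ → ℝ) (x : ℝ) :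
    ∫ y in Ioi 0, g (x + y) = ∫ t in Ioi x, g t := by
  simpa using (measurePreserving_add_left volume x).setIntegral_preimage_emb
    (measurableEmbedding_addLeft x) g (Ioi x)

theorem integral_Ioi_sub_mul_exp_neg {f : ℝ → ℝ} {lam x : ℝ} (hlam : 0 < lam)
    (hf : IntegrableOn (fun t => f t * exp (-lam * t)) (Ioi x)) :
    ∫ y in Ioi 0, (f (x + y) - f x) * (lam * exp (-lam * y))
      = lam * exp (lam * x) * (∫ t in Ioi x, f t * exp (-lam * t)) - f x := by
  have hshift : IntegrableOn (fun y => f (x + y) * exp (-lam * (x + y))) (Ioi 0) := by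
    have := ((measurePreserving_add_left volume x).integrableOn_comp_preimage
      (measurableEmbedding_addLeft x)).2 hf
    simpa [Function.comp_def] using this
  have hfactor : ∀ y, f (x + y) * (lam * exp (-lam * y))
      = lam * exp (lam * x) * (f (x + y) * exp (-lam * (x + y))) := by
    intro y
    have : exp (-lam * y) = exp (lam * x) * exp (-lam * (x + y)) := by
      rw [← exp_add]; ring_nf
    rw [this]; ring
  have hexp : ∫ y in Ioi (0 : ℝ), lam * exp (-lam * y) = 1 := by
    rw [integral_const_mul, integral_exp_mul_Ioi (neg_lt_zero.2 hlam)]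
    simp [hlam.ne']
  simp_rw [sub_mul, hfactor]
  rw [integral_sub (hshift.const_mul _)
      (((integrableOn_exp_mul_Ioi (neg_lt_zero.2 hlam) 0).const_mul lam).const_mul (f x)),
    integral_const_mul, integral_const_mul, hexp,
    integral_Ioi_comp_add_left (fun t => f t * exp (-lam * t)), mul_one]

theorem integral_Ioi_gamma_density_eq_one {α lam : ℝ} (hα : 0 < α) (hlam : 0 < lam) :
    ∫ x in Ioi (0 : ℝ), lam ^ α / Gamma α * x ^ (α - 1) * exp (-lam * x) = 1 := by
  simp_rw [mul_assoc, neg_mul]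
  rw [integral_const_mul, integral_rpow_mul_exp_neg_mul_Ioi hα hlam, one_div, inv_rpow hlam.le]
  field_simp [(Gamma_pos_of_pos hα).ne']

/-- The gamma density `p(x) = λ^{c/r}/Γ(c/r) x^{c/r-1} e^{-λx}` is a
probability density on `(0,∞)` and is stationary for the gene expression PDMP
generator `A f(x) = -r x f'(x) + c ∫₀^∞ (f(x+y)-f(x)) λ e^{-λy} dy`. -/
theorem gamma_stationary_unregulated (r lam c : ℝ)
    (hr : 0 < r) (hlam : 0 < lam) (hc : 0 < c) :
    (∫ x in Set.Ioi (0:ℝ),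
        lam ^ (c / r) / Real.Gamma (c / r) * x ^ (c / r - 1) * exp (-lam * x))
      = 1 ∧
    ∀ f : ℝ → ℝ, ContDiff ℝ 1 f → HasCompactSupport f →
      (∫ x in Set.Ioi (0:ℝ),
        (-r * x * deriv f x
          + c * ∫ y in Set.Ioi (0:ℝ), (f (x + y) - f x) * (lam * exp (-lam * y)))
        * (lam ^ (c / r) / Real.Gamma (c / r) * x ^ (c / r - 1) * exp (-lam * x)))
      = 0 := by
  have hα : 0 < c / r := div_pos hc hr
  refine ⟨integral_Ioi_gamma_density_eq_one hα hlam, fun f hf hsupp => ?_⟩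
  set α := c / r with hα_def
  set C := lam ^ α / Gamma α
  set G : ℝ → ℝ := fun t => f t * exp (-lam * t)
  set F : ℝ → ℝ := fun x => ∫ t in Ioi x, G t
  have hGi : Integrable G :=
    (hf.continuous.mul (by fun_prop)).integrable_of_hasCompactSupport hsupp.mul_right
  have hG0 : G =ᶠ[atTop] 0 := hsupp.mul_right.eventuallyEq_zero_atTop
  have hexact := integral_Ioi_deriv_rpow_mul_eq_zero hα
    (hasDerivAt_const_mul_integral_Ioi_sub (hf.differentiable one_ne_zero) hGi)
    ((hf.continuous_deriv le_rfl).mul (by fun_prop)).neg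
    (by filter_upwards [eventuallyEq_zero_atTop_integral_Ioi hG0, hG0] with x hx hx'
        simp only [G, Pi.zero_apply] at hx hx' ⊢
        rw [hx, hx', mul_zero, sub_zero])
    (by filter_upwards [hsupp.deriv.eventuallyEq_zero_atTop] with x hx; simp [hx])
  have hpt : ∀ x ∈ Ioi (0 : ℝ),
      (-r * x * deriv f x
          + c * ∫ y in Ioi (0:ℝ), (f (x + y) - f x) * (lam * exp (-lam * y)))
        * (C * x ^ (α - 1) * exp (-lam * x))
      = r * C * (x ^ (α - 1) * (α * (lam * F x - G x) + x * -(deriv f x * exp (-lam * x)))) := by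
    intro x _
    rw [integral_Ioi_sub_mul_exp_neg hlam hGi.integrableOn]
    have hexp : exp (lam * x) * exp (-lam * x) = 1 := by rw [← exp_add]; simp
    have hcα : c = r * α := by rw [hα_def]; field_simp
    linear_combination (c * C * lam * x ^ (α - 1) * F x) * hexp
      + (C * x ^ (α - 1) * (lam * F x - G x)) * hcα
  rw [setIntegral_congr_fun measurableSet_Ioi hpt, integral_const_mul, hexact, mul_zero]
end

section
/- Let $r, c, \lambda > 0$ and for $V > 0$ let $p_V = V/(V+\lambda)$. Let $\pi_V$ be the negative binomial distribution on $E_V = \{n/V : n \in \mathbb{N}\}$ given by $\pi_V(n/V) = \frac{(c/r)_n}{n!} p_V^n (1-p_V)^{c/r}$, and let $\pi$ be the gamma distribution on $(0,\infty)$ with density $\frac{\lambda^{c/r}}{\Gamma(c/r)} x^{c/r-1} e^{-\lambda x}$. Then $\pi_V$ converges weakly to $\pi$ as $V \to \infty$. -/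
/-!
The negative binomial law is a gamma mixture of Poisson laws: with `p_V = V / (V + λ)`,
`π_V(n/V) = ∫₀^∞ Poisson(V x)(n) γ(x) dx`. Hence `∑ₙ π_V(n/V) f(n/V) = ∫₀^∞ E[f(N_{Vx}/V)] γ(x) dx`
with `N_μ` Poisson of mean `μ`. As `N_{Vx}/V` has mean `x` and variance `x/V`, Chebyshev's
inequality gives `E[f(N_{Vx}/V)] → f(x)` for every `x > 0`, and dominated convergence
(`|f| ≤ C`, `γ` integrable) passes to the limit under the integral.
-/

open Filter Real
open MeasureTheory Set Topology ProbabilityTheory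

lemma Summable.mul_of_abs_le {ι : Type*} {q g : ι → ℝ} {C : ℝ} (hq : Summable q)
    (hg : ∀ i, |g i| ≤ C) : Summable fun i => q i * g i :=
  .of_norm_bounded (hq.abs.mul_right C) fun i => by
    rw [Real.norm_eq_abs, abs_mul]
    exact mul_le_mul_of_nonneg_left (hg i) (abs_nonneg _)

lemma measurable_tsum_of_summable {β : Type*} [MeasurableSpace β] {g : ℕ → β → ℝ}
    (hg : ∀ n, Measurable (g n)) (hs : ∀ x, Summable fun n => g n x) :
    Measurable fun x => ∑' n, g n x :=
  measurable_of_tendsto_metrizable (fun _ => Finset.measurable_sum _ fun n _ => hg n)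
    (tendsto_pi_nhds.mpr fun x => (hs x).hasSum.tendsto_sum_nat)

lemma Ring.choose_add_natCast_sub_one (α : ℝ) (n : ℕ) :
    Ring.choose (α + n - 1) n = (ascPochhammer ℝ n).eval α / n.factorial := by
  rw [← Ring.multichoose_eq, eq_div_iff (by positivity), mul_comm, ← nsmul_eq_mul,
    Ring.factorial_nsmul_multichoose_eq_ascPochhammer, Polynomial.ascPochhammer_smeval_eq_eval]

lemma Real.Gamma_add_natCast {α : ℝ} (hα : ∀ k : ℕ, α + k ≠ 0) (n : ℕ) :
    Gamma (α + n) = (ascPochhammer ℝ n).eval α * Gamma α := by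
  induction n with
  | zero => simp
  | succ n ih =>
    rw [Nat.cast_succ, ← add_assoc, Gamma_add_one (hα n), ih, ascPochhammer_succ_eval]
    ring

lemma integrableOn_gammaPDFReal {a r : ℝ} (ha : 0 < a) (hr : 0 < r) :
    IntegrableOn (gammaPDFReal a r) (Ioi 0) := by
  refine IntegrableOn.congr_fun ((integrableOn_rpow_mul_exp_neg_mul_rpow
    (by linarith : -1 < a - 1) one_pos hr).const_mul (r ^ a / Gamma a))
    (fun x (hx : 0 < x) => ?_) measurableSet_Ioi
  simp [gammaPDFReal, hx.le, mul_assoc]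

section Concentration

variable {ι : Type*} {q y : ι → ℝ} {f : ℝ → ℝ} {x C : ℝ}

lemma abs_tsum_mul_le {g : ι → ℝ} (hq0 : ∀ i, 0 ≤ q i) (hq : HasSum q 1) (hg : ∀ i, |g i| ≤ C) :
    |∑' i, q i * g i| ≤ C := by
  have hS := (hq.summable.mul_of_abs_le hg).hasSum
  have hB : HasSum (fun i => q i * C) C := by simpa using hq.mul_right C
  refine abs_le.mpr ⟨?_, hasSum_le (fun i => ?_) hS hB⟩
  · exact hasSum_le (fun i => by nlinarith [neg_abs_le (g i), hg i, hq0 i]) hB.neg hS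
  · nlinarith [le_abs_self (g i), hg i, hq0 i]

lemma abs_sub_le_add_mul_sq_sub (hC : ∀ z, |f z| ≤ C) {δ ε : ℝ} (hδ : 0 < δ) (hε : 0 ≤ ε)
    (hfδ : ∀ z, |z - x| < δ → |f z - f x| ≤ ε) (z : ℝ) :
    |f z - f x| ≤ ε + 2 * C / δ ^ 2 * (z - x) ^ 2 := by
  have hK : 0 ≤ 2 * C / δ ^ 2 := by have := (abs_nonneg _).trans (hC 0); positivity
  rcases lt_or_ge |z - x| δ with hnear | hfar
  · nlinarith [hfδ z hnear, sq_nonneg (z - x)]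
  · have hsq : δ ^ 2 ≤ (z - x) ^ 2 := by simpa only [sq_abs] using pow_le_pow_left₀ hδ.le hfar 2
    calc |f z - f x| ≤ |f z| + |f x| := abs_sub _ _
      _ ≤ 2 * C / δ ^ 2 * δ ^ 2 := by rw [div_mul_cancel₀ _ (by positivity)]; linarith [hC z, hC x]
      _ ≤ ε + 2 * C / δ ^ 2 * (z - x) ^ 2 := by nlinarith

lemma abs_tsum_mul_sub_le (hq0 : ∀ i, 0 ≤ q i) (hq : HasSum q 1) {v : ℝ}
    (hv : HasSum (fun i => q i * (y i - x) ^ 2) v) (hC : ∀ z, |f z| ≤ C) {δ ε : ℝ} (hδ : 0 < δ)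
    (hfδ : ∀ z, |z - x| < δ → |f z - f x| ≤ ε) :
    |∑' i, q i * f (y i) - f x| ≤ ε + 2 * C / δ ^ 2 * v := by
  have hε : 0 ≤ ε := (abs_nonneg _).trans (hfδ x (by simpa using hδ))
  have hS : HasSum (fun i => q i * (f (y i) - f x)) (∑' i, q i * f (y i) - f x) := by
    simpa [mul_sub] using
      (hq.summable.mul_of_abs_le fun i => hC (y i)).hasSum.sub (hq.mul_right (f x))
  have hB : HasSum (fun i => q i * (ε + 2 * C / δ ^ 2 * (y i - x) ^ 2))
      (ε + 2 * C / δ ^ 2 * v) := by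
    have h := (hq.mul_right ε).add (hv.mul_left (2 * C / δ ^ 2))
    rw [one_mul] at h
    exact h.congr_fun fun i => by ring
  have hpt : ∀ i, |q i * (f (y i) - f x)| ≤ q i * (ε + 2 * C / δ ^ 2 * (y i - x) ^ 2) := by
    intro i
    rw [abs_mul, abs_of_nonneg (hq0 i)]
    exact mul_le_mul_of_nonneg_left (abs_sub_le_add_mul_sq_sub hC hδ hε hfδ _) (hq0 i)
  exact abs_le.mpr ⟨hasSum_le (fun i => neg_le_of_abs_le (hpt i)) hB.neg hS,
    hasSum_le (fun i => (le_abs_self _).trans (hpt i)) hS hB⟩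

theorem tendsto_tsum_mul_of_tendsto_variance {α : Type*} {l : Filter α} {q y : α → ι → ℝ}
    {v : α → ℝ} (hq0 : ∀ᶠ a in l, ∀ i, 0 ≤ q a i) (hq : ∀ᶠ a in l, HasSum (q a) 1)
    (hv : ∀ᶠ a in l, HasSum (fun i => q a i * (y a i - x) ^ 2) (v a))
    (hv0 : Tendsto v l (𝓝 0)) (hf : ContinuousAt f x) (hC : ∀ z, |f z| ≤ C) :
    Tendsto (fun a => ∑' i, q a i * f (y a i)) l (𝓝 (f x)) := by
  rw [Metric.tendsto_nhds]
  intro ε hε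
  obtain ⟨δ, hδ, hfδ⟩ := Metric.continuousAt_iff.mp hf (ε / 2) (half_pos hε)
  have hbound : Tendsto (fun a => ε / 2 + 2 * C / δ ^ 2 * v a) l (𝓝 (ε / 2)) := by
    simpa using (hv0.const_mul (2 * C / δ ^ 2)).const_add (ε / 2)
  filter_upwards [hq0, hq, hv, hbound.eventually (gt_mem_nhds (half_lt_self hε))]
    with a hq0a hqa hva hlt
  rw [Real.dist_eq]
  refine (abs_tsum_mul_sub_le hq0a hqa hva hC hδ fun z hz => ?_).trans_lt hlt
  exact (hfδ (by rwa [Real.dist_eq])).le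

end Concentration

-- Mathlib's `poissonMeasure` takes its mean in `ℝ≥0`; here the mean `V * x` is real.
noncomputable def poissonWeight (μ : ℝ) (n : ℕ) : ℝ := exp (-μ) * μ ^ n / n.factorial

lemma poissonWeight_nonneg {μ : ℝ} (hμ : 0 ≤ μ) (n : ℕ) : 0 ≤ poissonWeight μ n := by
  unfold poissonWeight; positivity

lemma hasSum_poissonWeight (μ : ℝ) : HasSum (poissonWeight μ) 1 := by
  have h := (NormedSpace.expSeries_div_hasSum_exp μ).mul_left (exp (-μ))
  rw [← exp_eq_exp_ℝ, ← exp_add, neg_add_cancel, exp_zero] at h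
  exact h.congr_fun fun n => mul_div_assoc _ _ _

lemma natCast_succ_mul_poissonWeight_succ (μ : ℝ) (n : ℕ) :
    ((n + 1 : ℕ) : ℝ) * poissonWeight μ (n + 1) = μ * poissonWeight μ n := by
  simp only [poissonWeight, Nat.factorial_succ]
  push_cast
  field_simp
  ring

lemma hasSum_natCast_mul_poissonWeight (μ : ℝ) :
    HasSum (fun n : ℕ => (n : ℝ) * poissonWeight μ n) μ := by
  have h := (hasSum_poissonWeight μ).mul_left μ
  rw [mul_one, ← funext (natCast_succ_mul_poissonWeight_succ μ)] at h
  simpa using (hasSum_nat_add_iff (f := fun n : ℕ => (n : ℝ) * poissonWeight μ n) 1).mp h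

lemma hasSum_descFactorial_two_mul_poissonWeight (μ : ℝ) :
    HasSum (fun n : ℕ => (n : ℝ) * (n - 1) * poissonWeight μ n) (μ ^ 2) := by
  have h := (hasSum_natCast_mul_poissonWeight μ).mul_left μ
  have hshift : ∀ n : ℕ, μ * ((n : ℝ) * poissonWeight μ n)
      = ((n + 1 : ℕ) : ℝ) * ((n + 1 : ℕ) - 1) * poissonWeight μ (n + 1) := by
    intro n
    rw [mul_right_comm, natCast_succ_mul_poissonWeight_succ]
    push_cast; ring
  rw [funext hshift, ← sq] at h
  simpa using (hasSum_nat_add_iff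
    (f := fun n : ℕ => (n : ℝ) * (n - 1) * poissonWeight μ n) 1).mp h

lemma hasSum_poissonWeight_mul_sub_sq (μ : ℝ) :
    HasSum (fun n : ℕ => poissonWeight μ n * (n - μ) ^ 2) μ := by
  convert ((hasSum_descFactorial_two_mul_poissonWeight μ).add
    ((hasSum_natCast_mul_poissonWeight μ).mul_left (1 - 2 * μ))).add
    ((hasSum_poissonWeight μ).mul_left (μ ^ 2)) using 1
  · ext n; ring
  · ring

lemma poissonWeight_le_one {μ : ℝ} (hμ : 0 ≤ μ) (n : ℕ) : poissonWeight μ n ≤ 1 :=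
  le_hasSum (hasSum_poissonWeight μ) n fun m _ => poissonWeight_nonneg hμ m

lemma continuous_poissonWeight_mul (V : ℝ) (n : ℕ) :
    Continuous fun x => poissonWeight (V * x) n := by
  unfold poissonWeight; fun_prop

theorem tendsto_tsum_poissonWeight_mul {f : ℝ → ℝ} {x C : ℝ} (hx : 0 ≤ x)
    (hf : ContinuousAt f x) (hC : ∀ z, |f z| ≤ C) :
    Tendsto (fun V => ∑' n, poissonWeight (V * x) n * f (n / V)) atTop (𝓝 (f x)) := by
  refine tendsto_tsum_mul_of_tendsto_variance (v := fun V => x / V) ?_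
    (.of_forall fun V => hasSum_poissonWeight _) ?_ (tendsto_const_nhds.div_atTop tendsto_id) hf hC
  · filter_upwards [eventually_ge_atTop 0] with V hV
    exact poissonWeight_nonneg (mul_nonneg hV hx)
  · filter_upwards [eventually_gt_atTop 0] with V hV
    have h := (hasSum_poissonWeight_mul_sub_sq (V * x)).div_const (V ^ 2)
    rw [show V * x / V ^ 2 = x / V by field_simp] at h
    exact h.congr_fun fun n => by field_simp

lemma measurable_tsum_poissonWeight_mul {V C : ℝ} {g : ℕ → ℝ} (hg : ∀ n, |g n| ≤ C) :
    Measurable fun x => ∑' n, poissonWeight (V * x) n * g n :=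
  measurable_tsum_of_summable
    (fun n => ((continuous_poissonWeight_mul V n).mul continuous_const).measurable)
    fun _ => (hasSum_poissonWeight _).summable.mul_of_abs_le hg

theorem tendsto_integral_tsum_poissonWeight_mul {f ρ : ℝ → ℝ} {C : ℝ} (hf : Continuous f)
    (hC : ∀ z, |f z| ≤ C) (hρ : IntegrableOn ρ (Ioi 0)) :
    Tendsto (fun V => ∫ x in Ioi 0, (∑' n, poissonWeight (V * x) n * f (n / V)) * ρ x) atTop
      (𝓝 (∫ x in Ioi 0, f x * ρ x)) := by
  refine tendsto_integral_filter_of_dominated_convergence (fun x => C * ‖ρ x‖)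
    (.of_forall fun V => ((measurable_tsum_poissonWeight_mul fun n => hC _).aestronglyMeasurable.mul
      hρ.aestronglyMeasurable)) ?_ (hρ.norm.const_mul C) ?_
  · filter_upwards [eventually_ge_atTop 0] with V hV
    refine (ae_restrict_iff' measurableSet_Ioi).mpr (.of_forall fun x (hx : 0 < x) => ?_)
    rw [norm_mul, Real.norm_eq_abs]
    exact mul_le_mul_of_nonneg_right (abs_tsum_mul_le (poissonWeight_nonneg (by positivity))
      (hasSum_poissonWeight _) fun n => hC _) (norm_nonneg _)
  · refine (ae_restrict_iff' measurableSet_Ioi).mpr (.of_forall fun x (hx : 0 < x) => ?_)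
    exact (tendsto_tsum_poissonWeight_mul hx.le hf.continuousAt hC).mul_const (ρ x)

noncomputable def negBinomialWeight (α p : ℝ) (n : ℕ) : ℝ :=
  (ascPochhammer ℝ n).eval α / n.factorial * p ^ n * (1 - p) ^ α

lemma hasSum_negBinomialWeight (α : ℝ) {p : ℝ} (hp : |p| < 1) :
    HasSum (negBinomialWeight α p) 1 := by
  have h := (one_div_one_sub_rpow_hasFPowerSeriesOnBall_zero α).hasSum (y := p)
    (by simpa [enorm_eq_nnnorm, ← NNReal.coe_lt_coe] using hp)
  simp only [FormalMultilinearSeries.ofScalars_apply_eq, zero_add, smul_eq_mul,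
    Ring.choose_add_natCast_sub_one] at h
  have hp1 : (1 - p) ^ α ≠ 0 := (rpow_pos_of_pos (by linarith [le_abs_self p]) α).ne'
  have h' := h.mul_right ((1 - p) ^ α)
  rw [one_div, inv_mul_cancel₀ hp1] at h'
  exact h'.congr_fun fun n => by unfold negBinomialWeight; ring

lemma poissonWeight_mul_gammaPDFReal (α lam V : ℝ) {x : ℝ} (hx : 0 < x) (n : ℕ) :
    poissonWeight (V * x) n * gammaPDFReal α lam x
      = V ^ n * lam ^ α / (n.factorial * Gamma α)
        * (x ^ ((n + α) - 1) * exp (-((V + lam) * x))) := by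
  have hpow : x ^ ((n + α) - 1) = x ^ n * x ^ (α - 1) := by
    rw [← rpow_natCast, ← rpow_add hx]
    ring_nf
  rw [hpow, show -((V + lam) * x) = -(V * x) + -(lam * x) by ring, exp_add]
  simp only [poissonWeight, gammaPDFReal, if_pos hx.le]
  ring

theorem integral_poissonWeight_mul_gammaPDFReal {α lam V : ℝ} (hα : 0 < α) (hlam : 0 ≤ lam)
    (hV : 0 < V + lam) (n : ℕ) :
    ∫ x in Ioi 0, poissonWeight (V * x) n * gammaPDFReal α lam x
      = negBinomialWeight α (V / (V + lam)) n := by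
  rw [setIntegral_congr_fun measurableSet_Ioi fun x hx => poissonWeight_mul_gammaPDFReal α lam V hx n,
    integral_const_mul, integral_rpow_mul_exp_neg_mul_Ioi (by positivity) hV, add_comm (n : ℝ),
    Gamma_add_natCast (fun k => by positivity) n, rpow_add (by positivity), rpow_natCast,
    negBinomialWeight, one_sub_div hV.ne', add_sub_cancel_left, div_rpow hlam hV.le, one_div,
    inv_rpow hV.le]
  have := (Gamma_pos_of_pos hα).ne'
  have := (rpow_pos_of_pos hV α).ne'
  field_simp
  ring

theorem tsum_negBinomialWeight_mul_eq_integral {α lam V C : ℝ} (hα : 0 < α) (hlam : 0 < lam)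
    (hV : 0 ≤ V) {g : ℕ → ℝ} (hg : ∀ n, |g n| ≤ C) :
    ∑' n, negBinomialWeight α (V / (V + lam)) n * g n
      = ∫ x in Ioi 0, (∑' n, poissonWeight (V * x) n * g n) * gammaPDFReal α lam x := by
  have hVlam : 0 < V + lam := by positivity
  have hweight := integral_poissonWeight_mul_gammaPDFReal hα hlam.le hVlam
  set F : ℕ → ℝ → ℝ := fun n x => g n * (poissonWeight (V * x) n * gammaPDFReal α lam x)
  have hF : ∀ n, IntegrableOn (F n) (Ioi 0) := fun n =>
    (((integrableOn_gammaPDFReal hα hlam).bdd_mul (c := 1)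
      (continuous_poissonWeight_mul V n).aestronglyMeasurable
      ((ae_restrict_iff' measurableSet_Ioi).mpr (.of_forall fun x (hx : 0 < x) => by
        rw [Real.norm_eq_abs, abs_of_nonneg (poissonWeight_nonneg (by positivity) n)]
        exact poissonWeight_le_one (by positivity) n))).const_mul (g n))
  have hFnorm : ∀ n, ∫ x in Ioi 0, ‖F n x‖ = |g n| * negBinomialWeight α (V / (V + lam)) n := by
    intro n
    rw [← hweight, ← integral_const_mul]
    refine setIntegral_congr_fun measurableSet_Ioi fun x (hx : 0 < x) => ?_
    rw [Real.norm_eq_abs, abs_mul, abs_of_nonneg (mul_nonneg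
      (poissonWeight_nonneg (by positivity) n) (gammaPDFReal_nonneg hα hlam x))]
  have hsum : Summable fun n => ∫ x in Ioi 0, ‖F n x‖ := by
    simp_rw [hFnorm, mul_comm |g _|]
    exact (hasSum_negBinomialWeight α (p := V / (V + lam))
      (by rw [abs_of_nonneg (by positivity), div_lt_one hVlam]; linarith)).summable.mul_of_abs_le
      fun n => by simpa using hg n
  calc ∑' n, negBinomialWeight α (V / (V + lam)) n * g n = ∑' n, ∫ x in Ioi 0, F n x := by
        simp_rw [F, integral_const_mul, hweight, mul_comm]
    _ = ∫ x in Ioi 0, ∑' n, F n x := integral_tsum_of_summable_integral_norm hF hsum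
    _ = ∫ x in Ioi 0, (∑' n, poissonWeight (V * x) n * g n) * gammaPDFReal α lam x := by
        simp_rw [F, ← tsum_mul_right]
        congr 1; ext x; congr 1; ext n; ring

/-- Weak convergence of the negative binomial stationary distributions of the
mesoscopic model (on the lattice `{n/V}`) to the gamma stationary distribution
of the PDMP limit: for every bounded continuous `f`,
`∑_n π_V(n/V) f(n/V) → ∫₀^∞ f(x) γ(x) dx` as `V → ∞`. -/
theorem negative_binomial_to_gamma (r c lam : ℝ)
    (hr : 0 < r) (hc : 0 < c) (hlam : 0 < lam) :
    ∀ f : ℝ → ℝ, Continuous f → (∃ C, ∀ x, |f x| ≤ C) →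
      Tendsto (fun V : ℝ =>
          ∑' n : ℕ, ((ascPochhammer ℝ n).eval (c / r)) / (n.factorial : ℝ)
            * (V / (V + lam)) ^ n * (1 - V / (V + lam)) ^ (c / r) * f (n / V))
        atTop
        (nhds (∫ x in Set.Ioi (0:ℝ),
          f x * (lam ^ (c / r) / Real.Gamma (c / r) * x ^ (c / r - 1)
            * exp (-lam * x)))) := by
  rintro f hf ⟨C, hC⟩
  have hα : 0 < c / r := div_pos hc hr
  have hmixture : (fun V => ∫ x in Ioi 0,
        (∑' n, poissonWeight (V * x) n * f (n / V)) * gammaPDFReal (c / r) lam x)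
      =ᶠ[atTop] fun V => ∑' n, negBinomialWeight (c / r) (V / (V + lam)) n * f (n / V) := by
    filter_upwards [eventually_ge_atTop 0] with V hV
    exact (tsum_negBinomialWeight_mul_eq_integral hα hlam hV fun n => hC _).symm
  have hdensity : ∫ x in Ioi 0, f x * gammaPDFReal (c / r) lam x
      = ∫ x in Ioi 0, f x * (lam ^ (c / r) / Gamma (c / r) * x ^ (c / r - 1) * exp (-lam * x)) :=
    setIntegral_congr_fun measurableSet_Ioi fun x (hx : 0 < x) => by
      simp [gammaPDFReal, hx.le]
  rw [← hdensity]
  exact (tendsto_integral_tsum_poissonWeight_mul hf hC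
    (integrableOn_gammaPDFReal hα hlam)).congr' hmixture
end

section
/- Let $V > 0$, $r > 0$, let $c: \mathbb{R}_+ \to \mathbb{R}_+$, $p_V \in (0,1)$, $q_V = 1 - p_V$, and define $\pi_V(n) = A_V \frac{p_V^n}{n!} \prod_{k=0}^{n-1}\left(\frac{1}{r}c(k/V) + k\right)$ for $n \ge 0$, where $A_V$ normalizes $\pi_V$ to a probability distribution (assume the normalizing sum is finite). Then $\pi_V$ satisfies the stationarity equation $\sum_{n=0}^\infty \pi_V(n)\, \mathcal{A}_V f(n) = 0$ for every finitely supported $f: \mathbb{N} \to \mathbb{R}$, where $\mathcal{A}_V f(n) = rn[f(n-1)-f(n)] + c(n/V) \sum_{m=1}^\infty p_V^m q_V [f(n+m)-f(n)]$. -/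
/-!
The product formula is equivalent to the recursion `r (j+1) π(j+1) = p π(j) (b j + r j)`, where
`b j = c(j/V)`. By induction this gives the flux balance across every cut `{0,…,j-1} | {j,…}`:
the rate `r j π(j)` of degradations leaving `j` equals the rate `∑_{n<j} b n π(n) p^(j-n)` of
bursts from below reaching at least `j`. Pairing `π` with `𝒜_V f` for `f` supported below `N`
is a finite sum; collecting the coefficient of each `f j` (exchanging the burst sum over
`n < j`) leaves `r (j+1) π(j+1) - (r j + p b j) π(j) + (1-p) r j π(j)`, which vanishes by the
recursion.
-/

open Finset

/-- `𝒜_V` with `b n = c(n/V)` and `q = 1 - p`; at `n = 0` the truncated `n - 1` is harmless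
because of the factor `n`. -/
noncomputable def burstGenerator (r p : ℝ) (b f : ℕ → ℝ) (n : ℕ) : ℝ :=
  r * n * (f (n - 1) - f n) + b n * ∑' m : ℕ, p ^ (m + 1) * (1 - p) * (f (n + (m + 1)) - f n)

section

variable {r p : ℝ} {b π : ℕ → ℝ}

theorem hasSum_burst_weights (hp₀ : 0 ≤ p) (hp₁ : p < 1) :
    HasSum (fun m : ℕ => p ^ (m + 1) * (1 - p)) p := by
  have hp : 1 - p ≠ 0 := by linarith
  have h := (hasSum_geometric_of_lt_one hp₀ hp₁).mul_left (p * (1 - p))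
  rw [mul_inv_cancel_right₀ hp] at h
  rwa [show (fun m : ℕ => p ^ (m + 1) * (1 - p)) = fun m => p * (1 - p) * p ^ m from
    funext fun m => by ring]

theorem burstGenerator_eq_of_forall_ge {f : ℕ → ℝ} {N : ℕ} (hf : ∀ k, N ≤ k → f k = 0)
    (hp₀ : 0 ≤ p) (hp₁ : p < 1) (n : ℕ) :
    burstGenerator r p b f n = r * n * (f (n - 1) - f n) - p * b n * f n
      + b n * ∑ j ∈ Ico (n + 1) N, p ^ (j - n) * (1 - p) * f j := by
  have hjumps : HasSum (fun m : ℕ => p ^ (m + 1) * (1 - p) * f (n + (m + 1)))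
      (∑ j ∈ Ico (n + 1) N, p ^ (j - n) * (1 - p) * f j) := by
    rw [sum_Ico_eq_sum_range]
    simp only [show ∀ m, n + 1 + m = n + (m + 1) by omega, Nat.add_sub_cancel_left]
    exact hasSum_sum_of_ne_finset_zero fun m hm => by rw [hf _ (by simp at hm; omega), mul_zero]
  have hstay := (hasSum_burst_weights hp₀ hp₁).mul_right (f n)
  have hall : HasSum (fun m : ℕ => p ^ (m + 1) * (1 - p) * (f (n + (m + 1)) - f n))
      ((∑ j ∈ Ico (n + 1) N, p ^ (j - n) * (1 - p) * f j) - p * f n) := by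
    simpa only [mul_sub] using hjumps.sub hstay
  rw [burstGenerator, hall.tsum_eq]
  ring

theorem succ_mul_eq_of_eq_prod {A : ℝ} (hr : r ≠ 0)
    (hπ : ∀ n : ℕ, π n = A * p ^ n / (n.factorial : ℝ) * ∏ k ∈ range n, (b k / r + k))
    (j : ℕ) : r * (j + 1) * π (j + 1) = p * π j * (b j + r * j) := by
  rw [hπ, hπ, prod_range_succ, Nat.factorial_succ]
  push_cast
  field_simp
  ring

theorem flux_balance (hrec : ∀ j : ℕ, r * (j + 1) * π (j + 1) = p * π j * (b j + r * j))
    (j : ℕ) : ∑ n ∈ range j, b n * π n * p ^ (j - n) = r * j * π j := by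
  induction j with
  | zero => simp
  | succ j ih =>
    have hshift : ∀ n ∈ range j, b n * π n * p ^ (j + 1 - n) = p * (b n * π n * p ^ (j - n)) :=
      fun n hn => by rw [show j + 1 - n = j - n + 1 by simp at hn; omega, pow_succ]; ring
    rw [sum_range_succ, sum_congr rfl hshift, ← mul_sum, ih, Nat.add_sub_cancel_left, pow_one]
    push_cast
    rw [hrec j]
    ring

theorem tsum_mul_burstGenerator_eq_zero
    (hrec : ∀ j : ℕ, r * (j + 1) * π (j + 1) = p * π j * (b j + r * j))
    (hp₀ : 0 ≤ p) (hp₁ : p < 1) {f : ℕ → ℝ} {N : ℕ} (hf : ∀ k, N ≤ k → f k = 0) :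
    ∑' n, π n * burstGenerator r p b f n = 0 := by
  simp only [burstGenerator_eq_of_forall_ge hf hp₀ hp₁]
  have hvanish : ∀ n ∉ range (N + 1), π n * (r * n * (f (n - 1) - f n) - p * b n * f n
      + b n * ∑ j ∈ Ico (n + 1) N, p ^ (j - n) * (1 - p) * f j) = 0 := by
    intro n hn
    simp only [mem_range, not_lt] at hn
    rw [hf n (by omega), hf (n - 1) (by omega), Ico_eq_empty_of_le (by omega)]
    simp
  have hdown : ∑ n ∈ range (N + 1), r * n * π n * f (n - 1)
      = ∑ j ∈ range N, r * (j + 1) * π (j + 1) * f j := by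
    rw [sum_range_succ']
    simp
  have hleave : ∑ n ∈ range (N + 1), (r * n + p * b n) * π n * f n
      = ∑ j ∈ range N, (r * j + p * b j) * π j * f j := by
    rw [sum_range_succ, hf N le_rfl, mul_zero, add_zero]
  have hjump : ∑ n ∈ range (N + 1), ∑ j ∈ Ico (n + 1) N, b n * π n * p ^ (j - n) * (1 - p) * f j
      = ∑ j ∈ range N, (1 - p) * (r * j * π j) * f j := by
    rw [sum_comm' (t' := range N) (s' := range) fun n j => by simp only [mem_range, mem_Ico]; omega]
    refine sum_congr rfl fun j _ => ?_
    rw [← flux_balance hrec, mul_sum, sum_mul]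
    exact sum_congr rfl fun n _ => by ring
  calc ∑' n, π n * (r * n * (f (n - 1) - f n) - p * b n * f n
        + b n * ∑ j ∈ Ico (n + 1) N, p ^ (j - n) * (1 - p) * f j)
      = ∑ n ∈ range (N + 1), r * n * π n * f (n - 1)
        - ∑ n ∈ range (N + 1), (r * n + p * b n) * π n * f n
        + ∑ n ∈ range (N + 1), ∑ j ∈ Ico (n + 1) N, b n * π n * p ^ (j - n) * (1 - p) * f j := by
        rw [tsum_eq_sum hvanish, ← sum_sub_distrib, ← sum_add_distrib]
        refine sum_congr rfl fun n _ => ?_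
        rw [mul_sum, mul_add, mul_sum]
        congr 1
        · ring
        · exact sum_congr rfl fun j _ => by ring
    _ = ∑ j ∈ range N, (r * (j + 1) * π (j + 1) - (r * j + p * b j) * π j
        + (1 - p) * (r * j * π j)) * f j := by
        rw [hdown, hleave, hjump, ← sum_sub_distrib, ← sum_add_distrib]
        exact sum_congr rfl fun j _ => by ring
    _ = 0 := sum_eq_zero fun j _ => by rw [hrec j]; ring

end

theorem discrete_stationary_distribution_general (V r : ℝ) (hr : 0 < r)
    (c : ℝ → ℝ)
    (p q : ℝ) (hp : p ∈ Set.Ioo (0:ℝ) 1) (hq : q = 1 - p)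
    (A : ℝ)
    (π : ℕ → ℝ)
    (hπ : ∀ n : ℕ, π n = A * p ^ n / (n.factorial : ℝ)
      * ∏ k ∈ Finset.range n, (c (k / V) / r + k)) :
    ∀ f : ℕ → ℝ, (Function.support f).Finite →
      ∑' n : ℕ, π n * (r * n * (f (n - 1) - f n)
        + c (n / V) * ∑' m : ℕ, p ^ (m + 1) * q * (f (n + (m + 1)) - f n)) = 0 := by
  intro f hf
  obtain ⟨hp₀, hp₁⟩ := hp
  subst hq
  obtain ⟨M, hM⟩ := hf.bddAbove
  have hvanish : ∀ k, M + 1 ≤ k → f k = 0 := fun k hk =>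
    Function.notMem_support.mp fun hk' => by have := hM hk'; omega
  exact tsum_mul_burstGenerator_eq_zero (succ_mul_eq_of_eq_prod hr.ne' hπ) hp₀.le hp₁ hvanish

/-- Theorem 4.3 (stationarity of the explicit distribution): the distribution
`π_V(n) = A_V p^n/n! ∏_{k<n} (c(k/V)/r + k)` is stationary for the generator
`A_V f(n) = r n (f(n-1) - f(n)) + c(n/V) ∑_{m≥1} p^m q (f(n+m) - f(n))`
of the bursty gene expression Markov chain, i.e.
`∑_n π_V(n) A_V f(n) = 0` for every finitely supported `f`. -/
theorem discrete_stationary_distribution (V r : ℝ) (hV : 0 < V) (hr : 0 < r)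
    (c : ℝ → ℝ) (hcnn : ∀ x, 0 ≤ c x)
    (p q : ℝ) (hp : p ∈ Set.Ioo (0:ℝ) 1) (hq : q = 1 - p)
    (A : ℝ) (hA : 0 < A)
    (π : ℕ → ℝ)
    (hπ : ∀ n : ℕ, π n = A * p ^ n / (n.factorial : ℝ)
      * ∏ k ∈ Finset.range n, (c (k / V) / r + k))
    (hsum : Summable π) (hnorm : ∑' n : ℕ, π n = 1) :
    ∀ f : ℕ → ℝ, (Function.support f).Finite →
      ∑' n : ℕ, π n * (r * n * (f (n - 1) - f n)
        + c (n / V) * ∑' m : ℕ, p ^ (m + 1) * q * (f (n + (m + 1)) - f n)) = 0 :=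
  discrete_stationary_distribution_general V r hr c p q hp hq A π hπ
end
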